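/- Let 𝓕 be a family of subsets of a finite set X, let Y ⊆ X, and let 𝓕|_Y = {A ∩ Y : A ∈ 𝓕}. Then 𝔣𝔯(𝓕|_Y) ≤ 𝔣𝔯(𝓕). -/

import Mathlib

open Cardinal

noncomputable section

/-- The underlying set of the ordinal `ω_n`, the least ordinal of cardinality `ℵ_n`,
realized as a type. -/
abbrev OmegaN (n : ℕ) : Type := ((Cardinal.aleph n).ord).ToType

/-- `n` is *free* for the family `𝓕` of finite sets: for every set mapping
`S : [ω_n]^{<ω} → [ω_n]^{<ω}` there is a bijection `u` from `⋃ 𝓕` onto a subset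
`Y = u '' (⋃ 𝓕)` of `ω_n` such that `S (u '' A) ∩ Y ⊆ u '' A` for all `A ∈ 𝓕`. -/
def IsFree {α : Type*} [DecidableEq α] (𝓕 : Finset (Finset α)) (n : ℕ) : Prop :=
  ∀ S : Finset (OmegaN n) → Finset (OmegaN n),
    ∃ u : α → OmegaN n, Set.InjOn u ↑(𝓕.sup id) ∧
      ∀ A ∈ 𝓕, S (A.image u) ∩ (𝓕.sup id).image u ⊆ A.image u

/-- The index `𝔣𝔯 𝓕`: the least `n` which is free for `𝓕`. -/
noncomputable def fr {α : Type*} [DecidableEq α] (𝓕 : Finset (Finset α)) : ℕ :=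
  sInf {n | IsFree 𝓕 n}

/-- Conditions (1)–(4) of a nested-orders family on `X`,
where a sequence `(t₁, …, t_k)` is represented by the list `[t₁, …, t_k]`. -/
def NestedBase {α : Type*} (X : Set α) (S : Set (List α)) : Prop :=
  (∀ l ∈ S, ∀ x ∈ l, x ∈ X) ∧
  (∀ t ∈ X, [t] ∈ S) ∧
  (∀ l ∈ S, l.Nodup) ∧
  (∀ (l : List α) (t : α), l ++ [t] ∈ S → l ∈ S) ∧
  (∀ (l : List α) (s t : α), l ++ [s, t] ∈ S → l ++ [t] ∈ S) ∧
  (∀ (l : List α) (s t u : α), l ++ [s, t] ∈ S → l ++ [t, u] ∈ S → l ++ [s, u] ∈ S)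

/-- A nested-orders family on `X`: conditions (1)–(5). -/
def IsNestedOrders {α : Type*} (X : Set α) (S : Set (List α)) : Prop :=
  NestedBase X S ∧
  ∀ (l : List α) (s t : α), l ++ [t] ∈ S → l ++ [s] ∈ S → t ≠ s →
    (l ++ [t, s] ∈ S ∨ l ++ [s, t] ∈ S)

/-- An `n`-nested-orders family on `X`: sequences of length at most `n+2`,
conditions (1)–(4), and condition (5) for `k < n`. -/
def IsNNestedOrders {α : Type*} (n : ℕ) (X : Set α) (S : Set (List α)) : Prop :=
  NestedBase X S ∧
  (∀ l ∈ S, l.length ≤ n + 2) ∧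
  ∀ (l : List α) (s t : α), l.length < n → l ++ [t] ∈ S → l ++ [s] ∈ S → t ≠ s →
    (l ++ [t, s] ∈ S ∨ l ++ [s, t] ∈ S)

/-- `A` satisfies the defining condition of membership in `𝓕_{𝔖,n}`: whenever
`(t₁, …, t_{n+2}) ∈ 𝔖` and `t₁, …, t_{n+1} ∈ A`, also `t_{n+2} ∈ A`. -/
def MemFam {α : Type*} (n : ℕ) (S : Set (List α)) (A : Finset α) : Prop :=
  ∀ (l : List α) (t : α), l.length = n + 1 → l ++ [t] ∈ S →
    (∀ x ∈ l, x ∈ A) → t ∈ A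

/-- The index `𝔫𝔬 𝓕`: the least `n` for which there is an `n`-nested-orders family `𝔖`
on `⋃ 𝓕` with `𝓕 ⊆ 𝓕_{𝔖,n}`. -/
noncomputable def no {α : Type*} [DecidableEq α] (𝓕 : Finset (Finset α)) : ℕ :=
  sInf {n | ∃ S : Set (List α),
    IsNNestedOrders n ↑(𝓕.sup id) S ∧ ∀ A ∈ 𝓕, MemFam n S A}

/-!
Since `𝔣𝔯` is an infimum, which is `0` for an empty set, one first needs some `n` free for `𝓕`.
By induction on `k`, every set mapping `S` on a set `T` with `|T| ≥ ℵ_k` has a free set of size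
`k`: close an `ℵ_k`-sized subset of `T` under `S` to a set `M` of size `ℵ_k`, pick `x ∈ T \ M`,
and add `x` to a free set inside `M ∩ T` for `B ↦ S B ∪ S (B ∪ {x})`. Hence `|⋃ 𝓕|` is free
for `𝓕`.

Freeness passes from `𝓕` to `𝓕|_Y`: a map `u` witnessing freeness of `𝓕` for the mapping
`C ↦ ⋃_{D ⊆ C} S D` also witnesses freeness of `𝓕|_Y` for `S`.
-/

universe u

namespace Cardinal

theorem mk_iUnion_le_of_le {ι α : Type u} {f : ι → Set α} {κ : Cardinal.{u}} (hκ : ℵ₀ ≤ κ)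
    (hι : #ι ≤ κ) (hf : ∀ i, #(f i) ≤ κ) : #(⋃ i, f i) ≤ κ :=
  (mk_iUnion_le f).trans (mul_le_of_le hκ hι (ciSup_le' hf))

theorem mk_finset_le_of_le {α : Type u} {κ : Cardinal.{u}} (hκ : ℵ₀ ≤ κ) (hα : #α ≤ κ) :
    #(Finset α) ≤ κ := by
  classical
  exact (mk_le_of_surjective List.toFinset_surjective).trans
    ((mk_list_le_max α).trans (max_le hκ hα))

end Cardinal

theorem exists_superset_closed_mk_le {β : Type u} (S : Finset β → Finset β) {M₀ : Set β}
    {κ : Cardinal.{u}} (hκ : ℵ₀ ≤ κ) (hM₀ : #M₀ ≤ κ) :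
    ∃ M : Set β, M₀ ⊆ M ∧ (∀ B : Finset β, ↑B ⊆ M → ↑(S B) ⊆ M) ∧ #M ≤ κ := by
  classical
  let step : Set β → Set β := fun A =>
    A ∪ ⋃ C : Finset A, ↑(S (C.map (Function.Embedding.subtype _)))
  let f : ℕ → Set β := fun n => step^[n] M₀
  have f_succ (n : ℕ) : f (n + 1) = step (f n) := Function.iterate_succ_apply' step n M₀
  have f_mono : Monotone f :=
    monotone_nat_of_le_succ fun n => (f_succ n).symm ▸ Set.subset_union_left
  have mk_f (n : ℕ) : #(f n) ≤ κ := by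
    induction n with
    | zero => exact hM₀
    | succ n ih =>
      rw [f_succ]
      exact add_le_of_le hκ ih (mk_iUnion_le_of_le hκ (mk_finset_le_of_le hκ ih)
        fun _ => mk_le_aleph0.trans hκ) |>.trans' (mk_union_le _ _)
  refine ⟨⋃ n, f n, Set.subset_iUnion f 0, fun B hB => ?_, ?_⟩
  · obtain ⟨n, hn⟩ := f_mono.directed_le.exists_mem_subset_of_finset_subset_biUnion hB
    refine Set.Subset.trans ?_ (Set.subset_iUnion f (n + 1))
    rw [f_succ]
    refine Set.subset_union_of_subset_right
      (Set.subset_iUnion_of_subset (B.subtype (· ∈ f n)) ?_) _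
    rw [Finset.subtype_map_of_mem fun x hx => hn hx]
  · rw [← Equiv.ulift.surjective.iUnion_comp f]
    exact mk_iUnion_le_of_le hκ (by simp [hκ]) fun n => mk_f n.down

def IsFreeSet {β : Type*} [DecidableEq β] (S : Finset β → Finset β) (Y : Finset β) : Prop :=
  ∀ B ⊆ Y, S B ∩ Y ⊆ B

theorem isFreeSet_insert {β : Type*} [DecidableEq β] {S : Finset β → Finset β} {Y : Finset β}
    {x : β} (hY : IsFreeSet (fun B => S B ∪ S (insert x B)) Y) (hx : ∀ B ⊆ Y, x ∉ S B) :
    IsFreeSet S (insert x Y) := by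
  intro B hB y hy
  obtain ⟨hyS, hyY⟩ := Finset.mem_inter.mp hy
  rw [Finset.subset_insert_iff] at hB
  rcases Finset.mem_insert.mp hyY with rfl | hyY
  · by_contra hyB
    exact hx B (Finset.erase_eq_of_notMem hyB ▸ hB) hyS
  · have hyS' : y ∈ S (B.erase x) ∪ S (insert x (B.erase x)) := by
      by_cases hxB : x ∈ B
      · simp only [Finset.insert_erase hxB, Finset.mem_union, hyS, or_true]
      · simp only [Finset.erase_eq_of_notMem hxB, Finset.mem_union, hyS, true_or]
    exact Finset.erase_subset x B (hY _ hB (Finset.mem_inter.mpr ⟨hyS', hyY⟩))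

theorem exists_isFreeSet_card_eq {β : Type u} [DecidableEq β] (k : ℕ) (S : Finset β → Finset β)
    {T : Set β} (hT : ℵ_ k ≤ #T) : ∃ Y : Finset β, ↑Y ⊆ T ∧ Y.card = k ∧ IsFreeSet S Y := by
  induction k generalizing S T with
  | zero => exact ⟨∅, by simp, rfl, fun B hB => by simp [Finset.subset_empty.mp hB]⟩
  | succ k ih =>
    obtain ⟨M₀, hM₀T, hM₀⟩ := le_mk_iff_exists_subset.mp
      ((aleph_le_aleph.mpr (Nat.cast_le.mpr k.le_succ)).trans hT)
    obtain ⟨M, hM₀M, hM, hMk⟩ := exists_superset_closed_mk_le S (aleph0_le_aleph k) hM₀.le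
    obtain ⟨x, hxT, hxM⟩ : ∃ x ∈ T, x ∉ M := by
      by_contra! hTM
      exact (aleph_lt_aleph.mpr (Nat.cast_lt.mpr k.lt_succ_self)).not_ge
        (hT.trans ((mk_le_mk_of_subset hTM).trans hMk))
    obtain ⟨Y, hYM, hYk, hY⟩ := ih (fun B => S B ∪ S (insert x B)) (T := M ∩ T)
      (hM₀ ▸ mk_le_mk_of_subset (Set.subset_inter hM₀M hM₀T))
    have hxY : x ∉ Y := fun h => hxM (hYM h).1
    refine ⟨insert x Y, ?_, by rw [Finset.card_insert_of_notMem hxY, hYk],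
      isFreeSet_insert hY ?_⟩
    · rw [Finset.coe_insert]
      exact Set.insert_subset hxT (hYM.trans Set.inter_subset_right)
    · exact fun B hB hxS => hxM (hM B (fun b hb => (hYM (hB hb)).1) hxS)

theorem isFree_card_sup {α : Type*} [DecidableEq α] (𝓕 : Finset (Finset α)) :
    IsFree 𝓕 (𝓕.sup id).card := by
  intro S
  obtain ⟨Y, -, hYcard, hY⟩ := exists_isFreeSet_card_eq _ S (T := Set.univ)
    (by rw [mk_univ, mk_ord_toType])
  have : Nonempty (OmegaN (𝓕.sup id).card) :=
    mk_ne_zero_iff.mp (by rw [mk_ord_toType]; exact aleph_pos _ |>.ne')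
  have hcard : (↑(𝓕.sup id) : Set α).encard = (↑Y : Set (OmegaN (𝓕.sup id).card)).encard := by
    simp [hYcard]
  obtain ⟨u, hu⟩ := (𝓕.sup id).finite_toSet.exists_bijOn_of_encard_eq hcard
  have hUY : (𝓕.sup id).image u = Y :=
    Finset.coe_injective (by rw [Finset.coe_image, hu.image_eq])
  refine ⟨u, hu.injOn, fun A hA => hUY ▸ hY _ ?_⟩
  exact hUY ▸ Finset.image_subset_image (Finset.le_sup (f := id) hA)

theorem isFree_fr {α : Type*} [DecidableEq α] (𝓕 : Finset (Finset α)) : IsFree 𝓕 (fr 𝓕) :=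
  Nat.sInf_mem (s := {n | IsFree 𝓕 n}) ⟨_, isFree_card_sup 𝓕⟩

theorem IsFree.image_inter {α : Type*} [DecidableEq α] {𝓕 : Finset (Finset α)} {n : ℕ}
    (h : IsFree 𝓕 n) (Y : Finset α) : IsFree (𝓕.image (· ∩ Y)) n := by
  intro S
  obtain ⟨u, hinj, hfree⟩ := h fun C => C.powerset.sup S
  have hsup : (𝓕.image (· ∩ Y)).sup id ⊆ 𝓕.sup id ∩ Y :=
    Finset.sup_le fun _ hA' => by
      obtain ⟨A, hA, rfl⟩ := Finset.mem_image.mp hA'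
      exact Finset.inter_subset_inter_right (Finset.le_sup (f := id) hA)
  refine ⟨u, hinj.mono (by exact_mod_cast hsup.trans Finset.inter_subset_left), ?_⟩
  intro _ hA' _ hy
  obtain ⟨A, hA, rfl⟩ := Finset.mem_image.mp hA'
  have hAU : A ⊆ 𝓕.sup id := Finset.le_sup (f := id) hA
  obtain ⟨hyS, hyY⟩ := Finset.mem_inter.mp hy
  obtain ⟨b, hb, rfl⟩ := Finset.mem_image.mp hyY
  obtain ⟨hbU, hbY⟩ := Finset.mem_inter.mp (hsup hb)
  have hbS : u b ∈ (A.image u).powerset.sup S :=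
    Finset.le_sup (f := S)
      (Finset.mem_powerset.mpr (Finset.image_subset_image Finset.inter_subset_left)) hyS
  have hbA : u b ∈ A.image u :=
    hfree A hA (Finset.mem_inter.mpr ⟨hbS, Finset.mem_image_of_mem u hbU⟩)
  rw [← Finset.mem_coe, Finset.coe_image,
    hinj.mem_image_iff (Finset.coe_subset.mpr hAU) hbU] at hbA
  exact Finset.mem_image_of_mem u (Finset.mem_inter.mpr ⟨hbA, hbY⟩)

theorem statement5_general {α : Type*} [DecidableEq α] (𝓕 : Finset (Finset α)) (Y : Finset α) :
    fr (𝓕.image (fun A => A ∩ Y)) ≤ fr 𝓕 :=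
  Nat.sInf_le ((isFree_fr 𝓕).image_inter Y)

/-- Restriction does not increase `𝔣𝔯`: if `𝓕` consists of subsets of the finite set `X`
and `Y ⊆ X`, then `𝔣𝔯 (𝓕|_Y) ≤ 𝔣𝔯 𝓕`. -/
theorem statement5 {α : Type*} [DecidableEq α] (X : Finset α) (𝓕 : Finset (Finset α))
    (h𝓕 : ∀ A ∈ 𝓕, A ⊆ X) (Y : Finset α) (hY : Y ⊆ X) :
    fr (𝓕.image (fun A => A ∩ Y)) ≤ fr 𝓕 :=
  statement5_general 𝓕 Y
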